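/- In the uniform price auction with unit demand (v_1 > 0 and v_k = 0 for k > 1), bidding truthfully b* = (v_1, 0, ..., 0) maximizes the pointwise utility against any fixed adversary bid vector β: for every non-increasing b ∈ [0,1]^K and non-increasing β ∈ [0,1]^K, u(b, β) ≤ u(b*, β). -/

import Mathlib

open scoped Classical

/-- Allocation in the K-item standard auction. -/
noncomputable def alloc (K : ℕ) (b β : ℕ → ℝ) : ℕ :=
  Nat.findGreatest (fun k => ∀ j, 1 ≤ j → j ≤ k → β (K + 1 - j) ≤ b j) K

/-- Uniform price: the (K+1)-th highest bid overall. -/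
noncomputable def price (K : ℕ) (b β : ℕ → ℝ) : ℝ :=
  max (b (alloc K b β + 1)) (β (K - alloc K b β + 1))

/-- Uniform-price utility. -/
noncomputable def util (K : ℕ) (v b β : ℕ → ℝ) : ℝ :=
  ∑ l ∈ Finset.Icc 1 (alloc K b β), (v l - price K b β)

/-!
Against a fixed adversary bid `β`, a unit-demand bidder can never do better than
`max 0 (v 1 - β K)`: winning at least one item costs at least the uniform price, which is at
least the lowest adversary bid `β K`. The truthful bid attains this bound: it wins exactly when
`β K ≤ v 1`, and then pays `β K` for one item, or nothing at all when it wins several items: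
winning an item on which it bids `0` means that some adversary bid is `0`, and that bid sets
the price.
-/

section Allocation

variable (K : ℕ) (b β : ℕ → ℝ)

lemma alloc_le : alloc K b β ≤ K := by
  unfold alloc
  convert Nat.findGreatest_le K

lemma le_alloc {m : ℕ} (hm : m ≤ K) (h : ∀ j, 1 ≤ j → j ≤ m → β (K + 1 - j) ≤ b j) :
    m ≤ alloc K b β := by
  unfold alloc
  convert Nat.le_findGreatest (P := fun k => ∀ j, 1 ≤ j → j ≤ k → β (K + 1 - j) ≤ b j) hm h

lemma alloc_spec : ∀ j, 1 ≤ j → j ≤ alloc K b β → β (K + 1 - j) ≤ b j := by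
  unfold alloc
  convert Nat.findGreatest_spec (P := fun k => ∀ j, 1 ≤ j → j ≤ k → β (K + 1 - j) ≤ b j)
    (Nat.zero_le K) fun j hj hj0 => absurd (hj.trans hj0) (by omega)

end Allocation

section UnitDemand

variable {K : ℕ} {v b β : ℕ → ℝ}

lemma util_eq_zero_of_alloc_eq_zero (h : alloc K b β = 0) : util K v b β = 0 := by
  simp [util, h]

lemma util_eq_of_one_le_alloc (hv : ∀ k, 2 ≤ k → v k = 0) (h : 1 ≤ alloc K b β) :
    util K v b β = v 1 - alloc K b β * price K b β := by
  have hsum : ∑ l ∈ Finset.Icc 1 (alloc K b β), v l = v 1 :=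
    Finset.sum_eq_single_of_mem 1 (Finset.mem_Icc.mpr ⟨le_rfl, h⟩) fun l hl hl1 =>
      hv l (by have := (Finset.mem_Icc.mp hl).1; omega)
  rw [util, Finset.sum_sub_distrib, hsum, Finset.sum_const, Nat.card_Icc, nsmul_eq_mul,
    Nat.add_sub_cancel]

lemma le_alloc_mul_price (hβ : ∀ i j, 1 ≤ i → i ≤ j → j ≤ K → β j ≤ β i)
    (hβ0 : ∀ i, 1 ≤ i → i ≤ K → 0 ≤ β i) (h : 1 ≤ alloc K b β) :
    β K ≤ alloc K b β * price K b β := by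
  have hxK := alloc_le K b β
  have hprice : β K ≤ price K b β :=
    (hβ _ K (by omega) (by omega) le_rfl).trans (le_max_right _ _)
  calc β K ≤ price K b β := hprice
    _ = 1 * price K b β := (one_mul _).symm
    _ ≤ alloc K b β * price K b β := by
      gcongr
      · exact (hβ0 K (by omega) le_rfl).trans hprice
      · exact_mod_cast h

lemma util_le_max (hv : ∀ k, 2 ≤ k → v k = 0) (hβ : ∀ i j, 1 ≤ i → i ≤ j → j ≤ K → β j ≤ β i)
    (hβ0 : ∀ i, 1 ≤ i → i ≤ K → 0 ≤ β i) :
    util K v b β ≤ max 0 (v 1 - β K) := by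
  rcases Nat.eq_zero_or_pos (alloc K b β) with h | h
  · exact (util_eq_zero_of_alloc_eq_zero h).trans_le (le_max_left _ _)
  · rw [util_eq_of_one_le_alloc hv h]
    have hpay := le_alloc_mul_price hβ hβ0 h
    exact (by linarith : _ ≤ v 1 - β K).trans (le_max_right _ _)

end UnitDemand

section Truthful

def unitBid (w : ℝ) : ℕ → ℝ := fun k => if k = 1 then w else 0

variable {K : ℕ} {w : ℝ} {β : ℕ → ℝ}

lemma unitBid_of_ne_one {k : ℕ} (hk : k ≠ 1) : unitBid w k = 0 := if_neg hk

lemma one_le_alloc_unitBid (hK : 1 ≤ K) (h : β K ≤ w) : 1 ≤ alloc K (unitBid w) β :=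
  le_alloc K _ β hK fun j hj hj1 => by
    obtain rfl : j = 1 := by omega
    simpa [unitBid] using h

lemma le_of_one_le_alloc_unitBid (h : 1 ≤ alloc K (unitBid w) β) : β K ≤ w := by
  simpa [unitBid] using alloc_spec K (unitBid w) β 1 le_rfl h

lemma alloc_mul_price_unitBid_le (hK : 1 ≤ K) (hβ0 : ∀ i, 1 ≤ i → i ≤ K → 0 ≤ β i) :
    alloc K (unitBid w) β * price K (unitBid w) β ≤ β K := by
  have hβK := hβ0 K hK le_rfl
  have hxK := alloc_le K (unitBid w) β
  rcases Nat.lt_trichotomy (alloc K (unitBid w) β) 1 with h | h | h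
  · simp [Nat.lt_one_iff.mp h, hβK]
  · rw [price, h, unitBid_of_ne_one (by norm_num), Nat.sub_add_cancel hK, max_eq_right hβK]
    simp
  · have hlast := alloc_spec K (unitBid w) β _ (by omega) le_rfl
    rw [unitBid_of_ne_one (by omega)] at hlast
    rw [price, unitBid_of_ne_one (by omega), show K - alloc K (unitBid w) β + 1
      = K + 1 - alloc K (unitBid w) β by omega, max_eq_left hlast, mul_zero]
    exact hβK

lemma max_le_util_unitBid {v : ℕ → ℝ} (hK : 1 ≤ K) (hv : ∀ k, 2 ≤ k → v k = 0)
    (hβ0 : ∀ i, 1 ≤ i → i ≤ K → 0 ≤ β i) :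
    max 0 (v 1 - β K) ≤ util K v (unitBid (v 1)) β := by
  rcases Nat.eq_zero_or_pos (alloc K (unitBid (v 1)) β) with h | h
  · have hlt : v 1 < β K := by
      by_contra! hle
      exact absurd (one_le_alloc_unitBid hK hle) (by omega)
    rw [util_eq_zero_of_alloc_eq_zero h, max_eq_left (by linarith)]
  · rw [util_eq_of_one_le_alloc hv h]
    have hpay := alloc_mul_price_unitBid_le (w := v 1) hK hβ0
    have hwin := le_of_one_le_alloc_unitBid h
    have hβK := hβ0 K hK le_rfl
    exact max_le (by linarith) (by linarith)

end Truthful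

theorem uniform_unit_demand_truthful_general (K : ℕ) (v b β : ℕ → ℝ)
    (hK : 1 ≤ K)
    (hvunit : ∀ k, 2 ≤ k → v k = 0)
    (hβ : ∀ i j, 1 ≤ i → i ≤ j → j ≤ K → β j ≤ β i)
    (hβ01 : ∀ i, 1 ≤ i → i ≤ K → β i ∈ Set.Icc (0:ℝ) 1) :
    util K v b β ≤ util K v (fun k => if k = 1 then v 1 else 0) β := by
  have hβ0 : ∀ i, 1 ≤ i → i ≤ K → 0 ≤ β i := fun i hi hiK => (hβ01 i hi hiK).1
  calc util K v b β ≤ max 0 (v 1 - β K) := util_le_max hvunit hβ hβ0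
    _ ≤ util K v (unitBid (v 1)) β := max_le_util_unitBid hK hvunit hβ0

/-- Unit demand: truthful bidding `(v 1, 0, …, 0)` pointwise maximizes the
uniform-price utility against any fixed adversary bid vector. -/
theorem uniform_unit_demand_truthful (K : ℕ) (v b β : ℕ → ℝ)
    (hK : 1 ≤ K)
    (hv1 : 0 < v 1) (hv1le : v 1 ≤ 1)
    (hvunit : ∀ k, 2 ≤ k → v k = 0)
    (hb : ∀ i j, 1 ≤ i → i ≤ j → j ≤ K → b j ≤ b i)
    (hb01 : ∀ i, 1 ≤ i → i ≤ K → b i ∈ Set.Icc (0:ℝ) 1)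
    (hβ : ∀ i j, 1 ≤ i → i ≤ j → j ≤ K → β j ≤ β i)
    (hβ01 : ∀ i, 1 ≤ i → i ≤ K → β i ∈ Set.Icc (0:ℝ) 1)
    (hbK1 : b (K + 1) = 0) :
    util K v b β ≤ util K v (fun k => if k = 1 then v 1 else 0) β :=
  uniform_unit_demand_truthful_general K v b β hK hvunit hβ hβ01
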